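/- arXiv:2101.04306 — 3 statements merged into one kernel-verified Lean document; each statement's English description precedes it below -/
import Mathlib

section
/- Let σ > 0, σ₀ > 0 and γ ≥ 0 be real numbers, let n ≥ 1 be a natural number, and let a₁ ≥ a₂ ≥ … ≥ aₙ ≥ 0 be a non-increasing finite sequence of nonnegative reals with a₁ ≤ σ₀². If (1/2)·∑_{k=1}^{n} log(1 + aₖ/σ²) ≤ γ, then aₙ ≤ (2σ₀² / log(1 + σ₀²/σ²)) · (γ/n). -/
/-- Concavity bound: for `0 ≤ x ≤ M`, `x * log(1+M/s) ≤ M * log(1+x/s)`. -/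
lemma concave_log_bound (s M x : ℝ) (hs : 0 < s) (hM : 0 < M) (hx : 0 ≤ x) (hxM : x ≤ M) :
    x * Real.log (1 + M / s) ≤ M * Real.log (1 + x / s) := by
  set t : ℝ := x / M with ht
  have ht0 : 0 ≤ t := div_nonneg hx hM.le
  have ht1 : t ≤ 1 := (div_le_one hM).mpr hxM
  have hc : (0:ℝ) ≤ M / s := div_nonneg hM.le hs.le
  have hber := rpow_one_add_le_one_add_mul_self (s := M / s) (by linarith) ht0 ht1
  have hpos : (0:ℝ) < 1 + M / s := by linarith
  have hlog := Real.log_le_log (Real.rpow_pos_of_pos hpos t) hber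
  rw [Real.log_rpow hpos] at hlog
  have htx : t * (M / s) = x / s := by
    rw [ht]; field_simp
  rw [htx] at hlog
  have h2 := mul_le_mul_of_nonneg_left hlog hM.le
  calc x * Real.log (1 + M / s) = M * (t * Real.log (1 + M / s)) := by
        rw [ht]; field_simp
    _ ≤ M * Real.log (1 + x / s) := h2

/-- Abstract analytic content of Lemma 1 (uncertainty reduction): if a non-increasing
nonnegative sequence `a 1 ≥ … ≥ a n ≥ 0` with `a 1 ≤ σ₀²` has accumulated information
`(1/2)·∑ log(1 + aₖ/σ²) ≤ γ`, then `a n ≤ (2σ₀²/log(1+σ₀²/σ²))·(γ/n)`. -/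
theorem stmt_0 (σ σ₀ γ : ℝ) (hσ : 0 < σ) (hσ₀ : 0 < σ₀) (hγ : 0 ≤ γ)
    (n : ℕ) (hn : 1 ≤ n) (a : ℕ → ℝ)
    (hmono : ∀ k, 1 ≤ k → k < n → a (k + 1) ≤ a k)
    (hnonneg : ∀ k, 1 ≤ k → k ≤ n → 0 ≤ a k)
    (hstart : a 1 ≤ σ₀ ^ 2)
    (hsum : (1 / 2) * ∑ k ∈ Finset.Icc 1 n, Real.log (1 + a k / σ ^ 2) ≤ γ) :
    a n ≤ (2 * σ₀ ^ 2 / Real.log (1 + σ₀ ^ 2 / σ ^ 2)) * (γ / n) := by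
  have hσ2 : (0:ℝ) < σ ^ 2 := by positivity
  have hσ02 : (0:ℝ) < σ₀ ^ 2 := by positivity
  have han : 0 ≤ a n := hnonneg n hn le_rfl
  -- monotonicity: a j ≤ a k for 1 ≤ k ≤ j ≤ n
  have hanti : ∀ k, 1 ≤ k → ∀ j, k ≤ j → j ≤ n → a j ≤ a k := by
    intro k hk1 j hj
    induction j, hj using Nat.le_induction with
    | base => intro _; exact le_rfl
    | succ j hj ih =>
      intro hjn
      exact (hmono j (le_trans hk1 hj) (by omega)).trans (ih (by omega))
  have hank : ∀ k ∈ Finset.Icc 1 n, a n ≤ a k := by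
    intro k hk
    rw [Finset.mem_Icc] at hk
    exact hanti k hk.1 n hk.2 le_rfl
  -- each term ≥ log(1 + a n / σ²)
  have hterm : ∀ k ∈ Finset.Icc 1 n, Real.log (1 + a n / σ ^ 2) ≤ Real.log (1 + a k / σ ^ 2) := by
    intro k hk
    refine Real.log_le_log (by positivity) ?_
    gcongr
    exact hank k hk
  have hsumlow : (n : ℝ) * Real.log (1 + a n / σ ^ 2)
      ≤ ∑ k ∈ Finset.Icc 1 n, Real.log (1 + a k / σ ^ 2) := by
    have := Finset.card_nsmul_le_sum (Finset.Icc 1 n)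
      (fun k => Real.log (1 + a k / σ ^ 2)) (Real.log (1 + a n / σ ^ 2)) hterm
    simpa [Nat.card_Icc, nsmul_eq_mul] using this
  have hLn2 : (n : ℝ) * Real.log (1 + a n / σ ^ 2) ≤ 2 * γ := by linarith
  -- concavity bound
  have hanσ0 : a n ≤ σ₀ ^ 2 := (hanti 1 le_rfl n hn le_rfl).trans hstart
  have hkey := concave_log_bound (σ ^ 2) (σ₀ ^ 2) (a n) hσ2 hσ02 han hanσ0
  have hL0 : 0 < Real.log (1 + σ₀ ^ 2 / σ ^ 2) := by
    apply Real.log_pos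
    have : 0 < σ₀ ^ 2 / σ ^ 2 := by positivity
    linarith
  have hnpos : (0:ℝ) < n := by exact_mod_cast hn
  -- combine: a n * L0 ≤ σ₀² * Ln ≤ σ₀² * 2γ/n
  have h1 : a n * Real.log (1 + σ₀ ^ 2 / σ ^ 2) ≤ σ₀ ^ 2 * (2 * γ / n) := by
    refine hkey.trans ?_
    rw [mul_le_mul_iff_of_pos_left hσ02]
    rw [le_div_iff₀ hnpos]
    linarith [mul_comm (Real.log (1 + a n / σ ^ 2)) (n:ℝ)]
  rw [div_mul_eq_mul_div, le_div_iff₀ hL0]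
  have : σ₀ ^ 2 * (2 * γ / ↑n) = 2 * σ₀ ^ 2 * (γ / ↑n) := by ring
  linarith
end

section
/- Let V be a finite type and let f : Finset V → ℝ satisfy: f(∅) = 0; f is monotone (S ⊆ T implies f(S) ≤ f(T)); and f is submodular, i.e., for all S ⊆ T ⊆ V and all x ∉ T, f(S ∪ {x}) − f(S) ≥ f(T ∪ {x}) − f(T). Let G₀ = ∅ and for each k let G_{k+1} = G_k ∪ {x_k}, where x_k maximizes the marginal gain f(G_k ∪ {x}) − f(G_k) over all x ∈ V. Then for every natural number n ≥ 1 and every S ⊆ V with |S| ≤ n, f(G_n) ≥ (1 − 1/e) · f(S). -/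
/-- Nemhauser–Wolsey–Fisher greedy guarantee: for a monotone submodular set function `f`
with `f ∅ = 0`, the greedy sequence `G` (each step adding an element of maximal marginal
gain) satisfies `f (G n) ≥ (1 - 1/e) · f S` for every `S` with `|S| ≤ n`. -/
theorem stmt_3 (V : Type*) [Fintype V] [DecidableEq V] (f : Finset V → ℝ)
    (hempty : f ∅ = 0)
    (hmono : ∀ S T : Finset V, S ⊆ T → f S ≤ f T)
    (hsubmod : ∀ S T : Finset V, S ⊆ T → ∀ x : V, x ∉ T →
      f (insert x T) - f T ≤ f (insert x S) - f S)
    (G : ℕ → Finset V) (hG0 : G 0 = ∅)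
    (hGstep : ∀ k : ℕ, ∃ x : V,
      (∀ y : V, f (insert y (G k)) - f (G k) ≤ f (insert x (G k)) - f (G k)) ∧
      G (k + 1) = insert x (G k)) :
    ∀ n : ℕ, 1 ≤ n → ∀ S : Finset V, S.card ≤ n →
      (1 - 1 / Real.exp 1) * f S ≤ f (G n) := by
  -- telescoping lemma
  have tele : ∀ (A T : Finset V), f (A ∪ T) - f T ≤ ∑ x ∈ A, (f (insert x T) - f T) := by
    intro A T
    induction A using Finset.induction_on with
    | empty => simp
    | insert _ _ ha ih =>
      rename_i a A
      rw [Finset.sum_insert ha, Finset.insert_union]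
      have h1 : f (insert a (A ∪ T)) - f (A ∪ T) ≤ f (insert a T) - f T := by
        by_cases hm : a ∈ A ∪ T
        · rw [Finset.insert_eq_self.mpr hm]
          have := hmono T (insert a T) (Finset.subset_insert a T)
          linarith
        · exact hsubmod T (A ∪ T) Finset.subset_union_right a hm
      linarith
  intro n hn S hS
  have hn0 : (0:ℝ) < (n:ℝ) := by exact_mod_cast Nat.lt_of_lt_of_le Nat.zero_lt_one hn
  have hn1 : (1:ℝ) ≤ (n:ℝ) := by exact_mod_cast hn
  have hc0 : (0:ℝ) ≤ 1 - 1/(n:ℝ) := by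
    rw [sub_nonneg, div_le_one hn0]; exact hn1
  have hfS0 : 0 ≤ f S := by rw [← hempty]; exact hmono ∅ S (Finset.empty_subset S)
  -- step inequality
  have step : ∀ k : ℕ, f S - f (G (k+1)) ≤ (1 - 1/(n:ℝ)) * (f S - f (G k)) := by
    intro k
    obtain ⟨x, hx, hstep⟩ := hGstep k
    set δ : ℝ := f (G (k+1)) - f (G k) with hδ
    have hδ0 : 0 ≤ δ := by
      rw [hδ, sub_nonneg, hstep]
      exact hmono _ _ (Finset.subset_insert x (G k))
    have h1 : f S ≤ f (S ∪ G k) := hmono _ _ Finset.subset_union_left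
    have h2 : f (S ∪ G k) - f (G k) ≤ ∑ y ∈ S, (f (insert y (G k)) - f (G k)) :=
      tele S (G k)
    have h3 : ∑ y ∈ S, (f (insert y (G k)) - f (G k)) ≤ (S.card : ℝ) * δ := by
      calc ∑ y ∈ S, (f (insert y (G k)) - f (G k)) ≤ ∑ _y ∈ S, δ := by
            apply Finset.sum_le_sum
            intro y _
            have := hx y
            rw [hδ, hstep]
            linarith
        _ = (S.card : ℝ) * δ := by rw [Finset.sum_const, nsmul_eq_mul]
    have hcard : (S.card : ℝ) ≤ (n:ℝ) := by exact_mod_cast hS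
    have h4 : (S.card : ℝ) * δ ≤ (n:ℝ) * δ := mul_le_mul_of_nonneg_right hcard hδ0
    have key : f S - f (G k) ≤ (n:ℝ) * (f (G (k+1)) - f (G k)) := by
      rw [← hδ] at *; linarith
    have hinv : (1/(n:ℝ)) * (n:ℝ) = 1 := by field_simp
    nlinarith [mul_le_mul_of_nonneg_left key (le_of_lt (one_div_pos.mpr hn0))]
  -- iterate
  have iter : ∀ k : ℕ, f S - f (G k) ≤ (1 - 1/(n:ℝ))^k * f S := by
    intro k
    induction k with
    | zero => simp [hG0, hempty]
    | succ k ih =>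
      calc f S - f (G (k+1)) ≤ (1 - 1/(n:ℝ)) * (f S - f (G k)) := step k
        _ ≤ (1 - 1/(n:ℝ)) * ((1 - 1/(n:ℝ))^k * f S) := mul_le_mul_of_nonneg_left ih hc0
        _ = (1 - 1/(n:ℝ))^(k+1) * f S := by ring
  have hpow : (1 - 1/(n:ℝ))^n ≤ Real.exp (-1) := by
    have hbase : 1 - 1/(n:ℝ) ≤ Real.exp (-(1/(n:ℝ))) := by
      have := Real.add_one_le_exp (-(1/(n:ℝ)))
      linarith
    calc (1 - 1/(n:ℝ))^n ≤ (Real.exp (-(1/(n:ℝ))))^n := pow_le_pow_left₀ hc0 hbase n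
      _ = Real.exp ((n:ℝ) * (-(1/(n:ℝ)))) := (Real.exp_nat_mul _ n).symm
      _ = Real.exp (-1) := by
          congr 1
          field_simp
  have h5 : (1 - 1/(n:ℝ))^n * f S ≤ Real.exp (-1) * f S :=
    mul_le_mul_of_nonneg_right hpow hfS0
  have h6 := iter n
  have hexp : Real.exp (-1) = 1 / Real.exp 1 := by
    rw [Real.exp_neg]; exact inv_eq_one_div _
  rw [hexp] at h5
  linarith
end

section
/- Let V be a finite type, σ² > 0 a positive real, and K a positive semidefinite real matrix indexed by V × V. For a finset S ⊆ V, let K[S] denote the principal submatrix of K with rows and columns indexed by S, and define f(S) = (1/2)·log det(I + σ⁻²·K[S]), where I is the identity matrix indexed by S. Then f(∅) = 0, f is monotone (S ⊆ T implies f(S) ≤ f(T)), and f is submodular: for all S ⊆ T and x ∉ T, f(S ∪ {x}) − f(S) ≥ f(T ∪ {x}) − f(T). -/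
open Matrix Finset

section StmtAux

variable {V : Type*} [Fintype V] [DecidableEq V]

/-- Principal submatrix of `M` indexed by a finset `S`. -/
private def subM (M : Matrix V V ℝ) (S : Finset V) : Matrix S S ℝ :=
  M.submatrix Subtype.val Subtype.val

/-- A principal submatrix (along an injective map) of a positive definite real matrix is
positive definite. -/
private lemma posDef_submatrix {n m : Type*} [Fintype n] [Fintype m] [DecidableEq n]
    [DecidableEq m] {M : Matrix n n ℝ} (hM : M.PosDef) {e : m → n}
    (he : Function.Injective e) : (M.submatrix e e).PosDef := by
  have hsub : M.submatrix e e =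
      ((1 : Matrix n n ℝ).submatrix id e)ᴴ * M * ((1 : Matrix n n ℝ).submatrix id e) := by
    conv_lhs => rw [(by simp : M = 1 * M * 1)]
    rw [Matrix.submatrix_mul _ _ e id e Function.bijective_id,
      Matrix.submatrix_mul _ _ e id id Function.bijective_id, Matrix.submatrix_id_id]
    congr 1
    ext i j
    simp [Matrix.one_apply]
  refine Matrix.PosDef.of_dotProduct_mulVec_pos (hM.isHermitian.submatrix e) fun x hx => ?_
  have hP : ((1 : Matrix n n ℝ).submatrix id e) *ᵥ x ≠ 0 := by
    obtain ⟨i, hi⟩ := Function.ne_iff.mp hx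
    intro h
    apply hi
    have := congrFun h (e i)
    simpa [Matrix.mulVec, dotProduct, Matrix.one_apply, he.eq_iff] using this
  rw [hsub]
  simpa only [star_mulVec, Matrix.dotProduct_mulVec, Matrix.vecMul_vecMul] using
    hM.dotProduct_mulVec_pos hP

private lemma subM_posDef {M : Matrix V V ℝ} (hM : M.PosDef) (S : Finset V) :
    (subM M S).PosDef :=
  posDef_submatrix hM Subtype.val_injective

/-- Equivalence splitting off an inserted element. -/
private def insE {S : Finset V} {x : V} (hx : x ∉ S) : ↥(insert x S) ≃ ↥S ⊕ Unit where
  toFun z := if h : (z : V) ∈ S then Sum.inl ⟨z, h⟩ else Sum.inr ()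
  invFun z := match z with
    | Sum.inl s => ⟨s.1, Finset.mem_insert_of_mem s.2⟩
    | Sum.inr _ => ⟨x, Finset.mem_insert_self x S⟩
  left_inv z := by
    by_cases h : (z : V) ∈ S
    · simp only [h, dif_pos]
    · have hzx : (z : V) = x := by
        rcases Finset.mem_insert.mp z.2 with h' | h'
        · exact h'
        · exact absurd h' h
      simp only [h, dif_neg, not_false_iff]
      exact Subtype.ext hzx.symm
  right_inv z := by
    rcases z with s | u
    · simp only [s.2, dif_pos]
    · simp only [hx, dif_neg, not_false_iff]

private lemma subM_insert_eq (M : Matrix V V ℝ) {S : Finset V} {x : V} (hx : x ∉ S) :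
    (subM M (insert x S)).submatrix (insE hx).symm (insE hx).symm =
      Matrix.fromBlocks (subM M S) (Matrix.of fun s (_ : Unit) => M s x)
        (Matrix.of fun (_ : Unit) s => M x s) (Matrix.of fun _ _ => M x x) := by
  ext i j
  rcases i with s | u <;> rcases j with t | v <;> rfl

/-- The (generalized) Schur-complement scalar. -/
private noncomputable def schX (M : Matrix V V ℝ) (S : Finset V) (a b : V) : ℝ :=
  M a b - (fun s : ↥S => M a s) ⬝ᵥ ((subM M S)⁻¹ *ᵥ fun s : ↥S => M s b)

/-- An entry of `C * A * B` as a dot product. -/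
private lemma CAB_entry {p q n : Type*} [Fintype p] [Fintype q] [Fintype n]
    (C : Matrix p n ℝ) (A : Matrix n n ℝ) (B : Matrix n q ℝ) (z : p) (w : q) :
    (C * A * B) z w = (fun s => C z s) ⬝ᵥ (A *ᵥ fun s => B s w) := by
  simp only [Matrix.mul_apply, dotProduct, Matrix.mulVec, Finset.sum_mul,
    Finset.mul_sum]
  rw [Finset.sum_comm]
  exact Finset.sum_congr rfl fun s _ => Finset.sum_congr rfl fun t _ => by ring

private lemma det_insert (M : Matrix V V ℝ) (hM : M.PosDef) {S : Finset V} {x : V}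
    (hx : x ∉ S) :
    (subM M (insert x S)).det = (subM M S).det * schX M S x x := by
  have hP := subM_posDef hM S
  haveI : Invertible (subM M S) :=
    (subM M S).invertibleOfIsUnitDet (isUnit_iff_ne_zero.2 hP.det_pos.ne')
  rw [← Matrix.det_submatrix_equiv_self (insE hx).symm, subM_insert_eq M hx,
    Matrix.det_fromBlocks₁₁]
  congr 1
  rw [Matrix.det_unique, Matrix.invOf_eq_nonsing_inv, Matrix.sub_apply, CAB_entry]
  rfl

private def ins2E {S : Finset V} {x y : V} (hx : x ∉ S) (hy : y ∉ S) (hxy : x ≠ y) :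
    ↥(insert y (insert x S)) ≃ ↥S ⊕ (Unit ⊕ Unit) where
  toFun z := if h : (z : V) ∈ S then Sum.inl ⟨z, h⟩
    else if (z : V) = x then Sum.inr (Sum.inl ()) else Sum.inr (Sum.inr ())
  invFun z := match z with
    | Sum.inl s => ⟨s.1, Finset.mem_insert_of_mem (Finset.mem_insert_of_mem s.2)⟩
    | Sum.inr (Sum.inl _) => ⟨x, Finset.mem_insert_of_mem (Finset.mem_insert_self x S)⟩
    | Sum.inr (Sum.inr _) => ⟨y, Finset.mem_insert_self y _⟩
  left_inv z := by
    by_cases h : (z : V) ∈ S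
    · simp only [h, dif_pos]
    · by_cases h' : (z : V) = x
      · simp only [dif_neg h, if_pos h']
        exact Subtype.ext h'.symm
      · have hzy : (z : V) = y := by
          rcases Finset.mem_insert.mp z.2 with h'' | h''
          · exact h''
          · rcases Finset.mem_insert.mp h'' with h3 | h3
            · exact absurd h3 h'
            · exact absurd h3 h
        simp only [dif_neg h, if_neg h']
        exact Subtype.ext hzy.symm
  right_inv z := by
    rcases z with s | (u | u)
    · simp only [s.2, dif_pos]
    · simp only [hx, dif_neg, not_false_iff, if_pos]
    · have h1 : y ∉ S := hy
      have h2 : y ≠ x := hxy.symm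
      simp only [dif_neg h1, if_neg h2]

private def pk (x y : V) : Unit ⊕ Unit → V := fun z => match z with
  | Sum.inl _ => x
  | Sum.inr _ => y

private lemma subM_insert2_eq (M : Matrix V V ℝ) {S : Finset V} {x y : V} (hx : x ∉ S)
    (hy : y ∉ S) (hxy : x ≠ y) :
    (subM M (insert y (insert x S))).submatrix (ins2E hx hy hxy).symm (ins2E hx hy hxy).symm =
      Matrix.fromBlocks (subM M S) (Matrix.of fun s w => M s (pk x y w))
        (Matrix.of fun w s => M (pk x y w) s)
        (Matrix.of fun w w' => M (pk x y w) (pk x y w')) := by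
  ext i j
  rcases i with s | (u | u) <;> rcases j with t | (v | v) <;> rfl

private def u2 : Fin 2 ≃ Unit ⊕ Unit where
  toFun := ![Sum.inl (), Sum.inr ()]
  invFun z := match z with | Sum.inl _ => 0 | Sum.inr _ => 1
  left_inv := by decide
  right_inv := by rintro (⟨⟩ | ⟨⟩) <;> rfl

private lemma det_sum_unit (F : Matrix (Unit ⊕ Unit) (Unit ⊕ Unit) ℝ) :
    F.det = F (.inl ()) (.inl ()) * F (.inr ()) (.inr ())
      - F (.inl ()) (.inr ()) * F (.inr ()) (.inl ()) := by
  rw [← Matrix.det_submatrix_equiv_self u2, Matrix.det_fin_two]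
  rfl

private lemma det_insert2 (M : Matrix V V ℝ) (hM : M.PosDef) {S : Finset V} {x y : V}
    (hx : x ∉ S) (hy : y ∉ S) (hxy : x ≠ y) :
    (subM M (insert y (insert x S))).det =
      (subM M S).det *
        (schX M S x x * schX M S y y - schX M S x y * schX M S y x) := by
  have hP := subM_posDef hM S
  haveI : Invertible (subM M S) :=
    (subM M S).invertibleOfIsUnitDet (isUnit_iff_ne_zero.2 hP.det_pos.ne')
  rw [← Matrix.det_submatrix_equiv_self (ins2E hx hy hxy).symm, subM_insert2_eq M hx hy hxy,
    Matrix.det_fromBlocks₁₁]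
  congr 1
  rw [det_sum_unit, Matrix.invOf_eq_nonsing_inv]
  rw [Matrix.sub_apply, Matrix.sub_apply, Matrix.sub_apply, Matrix.sub_apply,
    CAB_entry, CAB_entry, CAB_entry, CAB_entry]
  rfl

private lemma schX_symm {M : Matrix V V ℝ} (hM : M.PosDef) (S : Finset V) (x y : V) :
    schX M S x y = schX M S y x := by
  have hMs : ∀ a b : V, M a b = M b a := by
    intro a b
    conv_lhs => rw [← hM.isHermitian]
    simp [Matrix.conjTranspose_apply]
  have hPinv : (subM M S)⁻¹.IsHermitian := ((subM_posDef hM S).inv).isHermitian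
  have hPs : ∀ s t : ↥S, (subM M S)⁻¹ s t = (subM M S)⁻¹ t s := by
    intro s t
    conv_lhs => rw [← hPinv]
    simp [Matrix.conjTranspose_apply]
  unfold schX
  rw [hMs x y]
  congr 1
  simp only [dotProduct, Matrix.mulVec, Finset.mul_sum]
  rw [Finset.sum_comm]
  refine Finset.sum_congr rfl fun s _ => Finset.sum_congr rfl fun t _ => ?_
  rw [hMs x ↑t, hPs t s, hMs (↑s) y]
  ring

private lemma psd_cs {n : Type*} [Fintype n] {B : Matrix n n ℝ} (hB : B.PosSemidef)
    (u z : n → ℝ) :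
    (u ⬝ᵥ (B *ᵥ z)) ^ 2 ≤ (u ⬝ᵥ (B *ᵥ u)) * (z ⬝ᵥ (B *ᵥ z)) := by
  have hBt : Bᵀ = B := by
    have h := hB.1
    ext i j
    have := congrFun (congrFun h i) j
    simpa [Matrix.conjTranspose_apply] using this
  have hswap : z ⬝ᵥ (B *ᵥ u) = u ⬝ᵥ (B *ᵥ z) := by
    rw [Matrix.dotProduct_mulVec, ← hBt, Matrix.vecMul_transpose, hBt,
      dotProduct_comm]
  have key : ∀ t : ℝ, 0 ≤ (z ⬝ᵥ (B *ᵥ z)) * (t * t) + (2 * (u ⬝ᵥ (B *ᵥ z))) * t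
      + (u ⬝ᵥ (B *ᵥ u)) := by
    intro t
    have h0 := hB.dotProduct_mulVec_nonneg (u + t • z)
    rw [star_trivial] at h0
    rw [Matrix.mulVec_add, Matrix.mulVec_smul] at h0
    simp only [dotProduct_add, add_dotProduct, dotProduct_smul,
      smul_dotProduct, smul_eq_mul] at h0
    rw [hswap] at h0
    nlinarith [h0]
  have hd := discrim_le_zero key
  have hd' : (2 * (u ⬝ᵥ (B *ᵥ z))) ^ 2
      - 4 * (z ⬝ᵥ (B *ᵥ z)) * (u ⬝ᵥ (B *ᵥ u)) ≤ 0 := by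
    simpa [discrim] using hd
  nlinarith [hd']

private lemma schX_ge_one {A : Matrix V V ℝ} (hA : A.PosSemidef) {S : Finset V} {x : V}
    (hx : x ∉ S) : 1 ≤ schX (1 + A) S x x := by
  set M : Matrix V V ℝ := 1 + A with hMdef
  have hM : M.PosDef := Matrix.PosDef.one.add_posSemidef hA
  have hAsymm : ∀ i j : V, A i j = A j i := by
    intro i j
    conv_lhs => rw [← hA.1]
    simp [Matrix.conjTranspose_apply]
  set P : Matrix S S ℝ := subM M S with hPdef
  have hP : P.PosDef := subM_posDef hM S
  have hPinv : P⁻¹.PosDef := hP.inv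
  set v : ↥S → ℝ := fun s => A x s with hv
  have hxne : ∀ s : ↥S, x ≠ (s : V) := fun s h => hx (h ▸ s.2)
  have hrow : (fun s : ↥S => M x s) = v := by
    funext s
    simp [hMdef, Matrix.add_apply, Matrix.one_apply_ne (hxne s), hv]
  have hcol : (fun s : ↥S => M s x) = v := by
    funext s
    simp [hMdef, Matrix.add_apply, Matrix.one_apply_ne' (hxne s), hv, hAsymm]
  set w : ↥S → ℝ := P⁻¹ *ᵥ v with hw
  set q : ℝ := v ⬝ᵥ w with hq
  have hq0 : 0 ≤ q := by
    have := hPinv.posSemidef.dotProduct_mulVec_nonneg v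
    rwa [star_trivial] at this
  set zf : V → ℝ := fun t => if h : t ∈ S then w ⟨t, h⟩ else 0 with hzf
  have hAz : ∀ a : V, (A *ᵥ zf) a = ∑ s : ↥S, A a s * w s := by
    intro a
    calc (A *ᵥ zf) a = ∑ t : V, A a t * zf t := rfl
      _ = ∑ t ∈ S, A a t * zf t := by
          refine (Finset.sum_subset (Finset.subset_univ S) ?_).symm
          intro t _ ht
          simp [hzf, dif_neg ht]
      _ = ∑ s : ↥S, A a s * w s := by
          rw [Finset.univ_eq_attach, ← Finset.sum_attach S (fun t => A a t * zf t)]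
          refine Finset.sum_congr rfl fun s _ => ?_
          simp [hzf, dif_pos s.2]
  have c1 : (Pi.single x 1 : V → ℝ) ⬝ᵥ (A *ᵥ zf) = q := by
    rw [single_dotProduct, one_mul, hAz x]
    rfl
  have c2 : (Pi.single x 1 : V → ℝ) ⬝ᵥ (A *ᵥ Pi.single x 1) = A x x := by
    rw [single_dotProduct, one_mul, Matrix.mulVec_single]
    simp
  have c3 : zf ⬝ᵥ (A *ᵥ zf) = w ⬝ᵥ (subM A S *ᵥ w) := by
    calc zf ⬝ᵥ (A *ᵥ zf) = ∑ t : V, zf t * (A *ᵥ zf) t := rfl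
      _ = ∑ t ∈ S, zf t * (A *ᵥ zf) t := by
          refine (Finset.sum_subset (Finset.subset_univ S) ?_).symm
          intro t _ ht
          simp [hzf, dif_neg ht]
      _ = ∑ s : ↥S, w s * (A *ᵥ zf) ↑s := by
          rw [Finset.univ_eq_attach, ← Finset.sum_attach S (fun t => zf t * (A *ᵥ zf) t)]
          refine Finset.sum_congr rfl fun s _ => ?_
          simp [hzf, dif_pos s.2]
      _ = ∑ s : ↥S, w s * ∑ s' : ↥S, A s s' * w s' :=
          Finset.sum_congr rfl fun s _ => by rw [hAz]
      _ = w ⬝ᵥ (subM A S *ᵥ w) := rfl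
  have hPs : subM A S = P - 1 := by
    ext s t
    by_cases h : s = t
    · subst h
      simp [hPdef, subM, hMdef, Matrix.sub_apply, Matrix.add_apply, Matrix.one_apply]
    · have h' : (s : V) ≠ (t : V) := fun hh => h (Subtype.ext hh)
      simp [hPdef, subM, hMdef, Matrix.sub_apply, Matrix.add_apply,
        Matrix.one_apply_ne h', Matrix.one_apply_ne h]
  have hPw : P *ᵥ w = v := by
    rw [hw, Matrix.mulVec_mulVec,
      Matrix.mul_nonsing_inv _ (isUnit_iff_ne_zero.2 hP.det_pos.ne'), Matrix.one_mulVec]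
  have c4 : w ⬝ᵥ (subM A S *ᵥ w) = q - w ⬝ᵥ w := by
    rw [hPs, Matrix.sub_mulVec, hPw, Matrix.one_mulVec, dotProduct_sub,
      dotProduct_comm w v, ← hq]
  have hww : 0 ≤ w ⬝ᵥ w := Finset.sum_nonneg fun i _ => mul_self_nonneg _
  have hAxx : 0 ≤ A x x := by
    have := hA.dotProduct_mulVec_nonneg (Pi.single x 1)
    rwa [star_trivial, c2] at this
  have hcs := psd_cs hA (Pi.single x 1) zf
  rw [c1, c2, c3, c4] at hcs
  have hqA : q ≤ A x x := by nlinarith [hcs, hq0, hww, hAxx, mul_nonneg hAxx hww]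
  have hMxx : M x x = 1 + A x x := by
    simp [hMdef, Matrix.add_apply, Matrix.one_apply_eq]
  have hsch : schX M S x x = M x x - q := by
    rw [schX, hrow, hcol, ← hPdef, ← hw, ← hq]
  rw [hsch, hMxx]
  linarith

end StmtAux

/-- The Gaussian information-gain set function `f(S) = (1/2)·log det(I + σ⁻²·K[S])`,
for a positive semidefinite kernel matrix `K`, satisfies `f ∅ = 0`, is monotone, and
is submodular. -/
theorem stmt_4 (V : Type*) [Fintype V] [DecidableEq V] (σ2 : ℝ) (hσ2 : 0 < σ2)
    (K : Matrix V V ℝ) (hK : K.PosSemidef) (f : Finset V → ℝ)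
    (hf : ∀ S : Finset V, f S = (1 / 2) *
      Real.log (Matrix.det ((1 : Matrix S S ℝ) +
        σ2⁻¹ • K.submatrix (Subtype.val : S → V) (Subtype.val : S → V)))) :
    f ∅ = 0 ∧
    (∀ S T : Finset V, S ⊆ T → f S ≤ f T) ∧
    (∀ S T : Finset V, S ⊆ T → ∀ x : V, x ∉ T →
      f (insert x T) - f T ≤ f (insert x S) - f S) := by
  classical
  -- the positive semidefinite matrix `A` and the positive definite matrix `M = 1 + A`
  set A : Matrix V V ℝ := σ2⁻¹ • K with hAdef
  have hA : A.PosSemidef := by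
    refine Matrix.PosSemidef.of_dotProduct_mulVec_nonneg ?_ fun x => ?_
    · show Aᴴ = A
      rw [hAdef, Matrix.conjTranspose_smul, hK.1]
      simp
    · rw [hAdef, Matrix.smul_mulVec, dotProduct_smul, smul_eq_mul]
      exact mul_nonneg (inv_nonneg.2 hσ2.le) (hK.dotProduct_mulVec_nonneg x)
  set M : Matrix V V ℝ := 1 + A with hMdef
  have hM : M.PosDef := Matrix.PosDef.one.add_posSemidef hA
  -- rewrite `f` through principal submatrices of `M`
  have hfd : ∀ S : Finset V, f S = (1 / 2) * Real.log ((subM M S).det) := by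
    intro S
    have hm : (1 : Matrix S S ℝ) +
        σ2⁻¹ • K.submatrix (Subtype.val : S → V) (Subtype.val : S → V) = subM M S := by
      ext s t
      simp [subM, hMdef, hAdef, Matrix.add_apply, Matrix.one_apply, Subtype.val_inj]
    rw [hf S, hm]
  have hdpos : ∀ S : Finset V, 0 < (subM M S).det := fun S => (subM_posDef hM S).det_pos
  -- empty set
  have hempty : f ∅ = 0 := by
    haveI : IsEmpty ↥(∅ : Finset V) := ⟨fun a => (Finset.notMem_empty _ a.2)⟩
    rw [hfd ∅, Matrix.det_isEmpty, Real.log_one, mul_zero]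
  -- single-step monotonicity
  have hstep : ∀ (S : Finset V) (x : V), f S ≤ f (insert x S) := by
    intro S x
    by_cases hx : x ∈ S
    · rw [Finset.insert_eq_self.2 hx]
    · have h1 : (subM M S).det ≤ (subM M (insert x S)).det := by
        rw [det_insert M hM hx]
        have hs := schX_ge_one hA hx
        nlinarith [hdpos S]
      rw [hfd, hfd]
      have := Real.log_le_log (hdpos S) h1
      linarith
  -- monotonicity
  have hmono : ∀ (n : ℕ) (S T : Finset V), S ⊆ T → (T \ S).card = n → f S ≤ f T := by
    intro n
    induction n with
    | zero =>
      intro S T hST hcard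
      have h1 : T ⊆ S := Finset.sdiff_eq_empty_iff_subset.mp (Finset.card_eq_zero.mp hcard)
      rw [Finset.Subset.antisymm hST h1]
    | succ n ih =>
      intro S T hST hcard
      have hne : (T \ S).Nonempty := by
        rw [← Finset.card_pos, hcard]; omega
      obtain ⟨x, hxd⟩ := hne
      have hxT : x ∈ T := (Finset.mem_sdiff.mp hxd).1
      have hxS : x ∉ S := (Finset.mem_sdiff.mp hxd).2
      have hsub : insert x S ⊆ T := Finset.insert_subset hxT hST
      have hcard' : (T \ insert x S).card = n := by
        rw [Finset.sdiff_insert, Finset.card_erase_of_mem hxd, hcard]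
        omega
      exact le_trans (hstep S x) (ih (insert x S) T hsub hcard')
  -- adjacent submodularity
  have hadj : ∀ (S : Finset V) (x y : V), x ∉ S → y ∉ S → x ≠ y →
      f (insert x (insert y S)) - f (insert y S) ≤ f (insert x S) - f S := by
    intro S x y hx hy hxy
    have hdS := hdpos S
    have hdx := hdpos (insert x S)
    have hdy := hdpos (insert y S)
    have hdxy := hdpos (insert x (insert y S))
    have h2 := det_insert2 M hM hy hx hxy.symm
    have hsym : schX M S y x = schX M S x y := schX_symm hM S y x
    have hdet : (subM M (insert x (insert y S))).det * (subM M S).det ≤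
        (subM M (insert x S)).det * (subM M (insert y S)).det := by
      rw [h2, det_insert M hM hx, det_insert M hM hy, hsym]
      nlinarith [sq_nonneg ((subM M S).det * schX M S x y), hdS]
    have hlog := Real.log_le_log (mul_pos hdxy hdS) hdet
    rw [Real.log_mul hdxy.ne' hdS.ne', Real.log_mul hdx.ne' hdy.ne'] at hlog
    rw [hfd, hfd, hfd, hfd]
    linarith
  -- general submodularity by induction
  have hsubm : ∀ (n : ℕ) (S T : Finset V), S ⊆ T → ∀ x : V, x ∉ T → (T \ S).card = n →
      f (insert x T) - f T ≤ f (insert x S) - f S := by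
    intro n
    induction n with
    | zero =>
      intro S T hST x _ hcard
      have h1 : T ⊆ S := Finset.sdiff_eq_empty_iff_subset.mp (Finset.card_eq_zero.mp hcard)
      rw [Finset.Subset.antisymm hST h1]
    | succ n ih =>
      intro S T hST x hxT hcard
      have hne : (T \ S).Nonempty := by
        rw [← Finset.card_pos, hcard]; omega
      obtain ⟨y, hyd⟩ := hne
      have hyT : y ∈ T := (Finset.mem_sdiff.mp hyd).1
      have hyS : y ∉ S := (Finset.mem_sdiff.mp hyd).2
      have hsub : insert y S ⊆ T := Finset.insert_subset hyT hST
      have hcard' : (T \ insert y S).card = n := by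
        rw [Finset.sdiff_insert, Finset.card_erase_of_mem hyd, hcard]
        omega
      have hxS : x ∉ S := fun h => hxT (hST h)
      have hxy : x ≠ y := fun h => hxT (h ▸ hyT)
      calc f (insert x T) - f T
          ≤ f (insert x (insert y S)) - f (insert y S) := ih (insert y S) T hsub x hxT hcard'
        _ ≤ f (insert x S) - f S := hadj S x y hxS hyS hxy
  exact ⟨hempty, fun S T hST => hmono _ S T hST rfl,
    fun S T hST x hxT => hsubm _ S T hST x hxT rfl⟩
end
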